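/- Fix k ≥ 1 and v, w ∈ U(k). For every 𝔲 ∈ 𝔘 there exists a unique element 𝔲.g ∈ 𝔘 such that π_m(𝔲.g) = (w ⊕ I_{m−k})^{-1} · π_m(𝔲) · (v ⊕ I_{m−k}) for all m ≥ k, where x ⊕ I_{m−k} denotes the block-diagonal embedding of U(k) into U(m). The resulting map 𝔘 → 𝔘, 𝔲 ↦ 𝔲.g, is Borel measurable and preserves the measure χ: the pushforward of χ under this map equals χ. -/

import Mathlib

/-
For `m ≥ k` the matrices `w⁻¹ ⊕ I` and `v ⊕ I` leave the last row and column of a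
`(m+2)×(m+2)` matrix alone, and the Schur-complement formula defining `π_m^{m+1}` is
equivariant under such block-diagonal conjugations. Hence the prescribed coordinates at levels
`m ≥ k` form a compatible family, which extends uniquely downwards to a point of `𝔘`.

Measurability and invariance of `χ` can be tested on coordinates `m ≥ k`: cylinder sets at these
levels generate the σ-algebra of `𝔘` and form a π-system. At level `m` the map is `x ↦ a x b`,
which preserves `χ_m` because a left-invariant probability measure on a group is also
right-invariant (Fubini applied to `(x, y) ↦ 1_s (y x)`).
-/

open MeasureTheory Filter Matrix
open scoped ENNReal ComplexConjugate

noncomputable section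

/-- The unitary group `U(m+1)` (so `UU m` is the paper's `U(m+1)`, `m ≥ 0`). -/
abbrev UU (m : ℕ) : Type := Matrix.unitaryGroup (Fin (m + 1)) ℂ

instance (m : ℕ) : MeasurableSpace (UU m) := borel _
instance (m : ℕ) : BorelSpace (UU m) := ⟨rfl⟩

/-- The block transform of the paper: for `u = [[z,a],[b,t]] ∈ U(m+2)` it returns
`z - a (1+t)⁻¹ b` if `t ≠ -1`, and `z` if `t = -1`. -/
def blockPi (m : ℕ) (u : UU (m + 1)) : Matrix (Fin (m + 1)) (Fin (m + 1)) ℂ :=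
  let M : Matrix (Fin (m + 2)) (Fin (m + 2)) ℂ := u
  if M (Fin.last (m + 1)) (Fin.last (m + 1)) = -1 then
    fun i j => M i.castSucc j.castSucc
  else
    fun i j => M i.castSucc j.castSucc -
      M i.castSucc (Fin.last (m + 1)) *
        (1 + M (Fin.last (m + 1)) (Fin.last (m + 1)))⁻¹ *
        M (Fin.last (m + 1)) j.castSucc

/-- `π` is the projective system of maps `π_m^{m+1}` of the paper. -/
def IsProjSystem (π : ∀ m, UU (m + 1) → UU m) : Prop :=
  ∀ (m : ℕ) (u : UU (m + 1)),
    ((π m u : Matrix (Fin (m + 1)) (Fin (m + 1)) ℂ)) = blockPi m u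

/-- The projective limit `𝔘` of the groups `U(m+1)` under `π`. -/
abbrev VU (π : ∀ m, UU (m + 1) → UU m) : Type :=
  { u : ∀ m, UU m // ∀ m, π m (u (m + 1)) = u m }

/-- The last diagonal entry of a unitary matrix, i.e. the paper's `⟨u(𝔢_i) ∣ 𝔢_i⟩`. -/
def pwEntry (m : ℕ) (v : UU m) : ℂ :=
  (v : Matrix (Fin (m + 1)) (Fin (m + 1)) ℂ) (Fin.last m) (Fin.last m)

/-- The Paley–Wiener coordinate functions `φ_i` on the projective limit. -/
def pw (π : ∀ m, UU (m + 1) → UU m) (i : ℕ) (u : VU π) : ℂ := pwEntry i (u.1 i)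

/-- The block-diagonal embedding `v ↦ v ⊕ I` of a `(k+1)×(k+1)` matrix into
`(m+1)×(m+1)` matrices (`k ≤ m`). -/
def embedMat (k m : ℕ) (v : Matrix (Fin (k + 1)) (Fin (k + 1)) ℂ) :
    Matrix (Fin (m + 1)) (Fin (m + 1)) ℂ := fun i j =>
  if h : (i : ℕ) < k + 1 ∧ (j : ℕ) < k + 1 then v ⟨i, h.1⟩ ⟨j, h.2⟩
  else if (i : ℕ) = (j : ℕ) then 1 else 0


-- Makes multiplication on `UU m` jointly measurable for the Borel σ-algebra.
instance (m : ℕ) : SecondCountableTopology (UU m) :=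
  Topology.IsInducing.subtypeVal.secondCountableTopology (β := Fin (m + 1) → Fin (m + 1) → ℂ)

abbrev ProjLimit {X : ℕ → Type*} (f : ∀ n, X (n + 1) → X n) : Type _ :=
  { x : ∀ n, X n // ∀ n, f n (x (n + 1)) = x n }

namespace ProjLimit

variable {X : ℕ → Type*} {f : ∀ n, X (n + 1) → X n}

theorem ext_of_le (k : ℕ) {x y : ProjLimit f} (h : ∀ n, k ≤ n → x.1 n = y.1 n) : x = y := by
  suffices ∀ j n, k ≤ n + j → x.1 n = y.1 n from Subtype.ext (funext fun n => this k n (by omega))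
  intro j
  induction j with
  | zero => exact h
  | succ j ih =>
    intro n hn
    rw [← x.2 n, ← y.2 n, ih (n + 1) (by omega)]

section Extend

variable {k : ℕ} (F : ∀ n, k ≤ n → X n)

def descend (f : ∀ n, X (n + 1) → X n) : ∀ j n, k ≤ n + j → X n
  | 0, n, h => F n h
  | j + 1, n, _ => f n (descend f j (n + 1) (by omega))

variable {F}

theorem descend_succ (hF : ∀ n (h : k ≤ n), f n (F (n + 1) (by omega)) = F n h) :
    ∀ j n (h : k ≤ n + j), descend F f (j + 1) n (by omega) = descend F f j n h := by
  intro j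
  induction j with
  | zero => intro n h; exact hF n h
  | succ j ih => intro n h; exact congrArg (f n) (ih (n + 1) (by omega))

theorem descend_of_le (hF : ∀ n (h : k ≤ n), f n (F (n + 1) (by omega)) = F n h) {n : ℕ}
    (hn : k ≤ n) : ∀ j, descend F f j n (by omega) = F n hn := by
  intro j
  induction j with
  | zero => rfl
  | succ j ih => rw [descend_succ hF j n (by omega), ih]

theorem existsUnique_of_compat (hF : ∀ n (h : k ≤ n), f n (F (n + 1) (by omega)) = F n h) :
    ∃! x : ProjLimit f, ∀ n (h : k ≤ n), x.1 n = F n h := by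
  refine ⟨⟨fun n => descend F f k n (by omega), fun n => descend_succ hF k n (by omega)⟩,
    fun n h => descend_of_le hF h k, fun y hy => ext_of_le k fun n h => ?_⟩
  exact (hy n h).trans (descend_of_le hF h k).symm

end Extend

variable [∀ n, MeasurableSpace (X n)]

theorem measurable_coord (n : ℕ) : Measurable fun x : ProjLimit f => x.1 n :=
  (measurable_pi_apply n).comp measurable_subtype_coe

theorem exists_preimage_coord_eq (hf : ∀ n, Measurable (f n)) {n n' : ℕ} (h : n ≤ n')
    {B : Set (X n)} (hB : MeasurableSet B) :
    ∃ B' : Set (X n'), MeasurableSet B' ∧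
      (fun x : ProjLimit f => x.1 n) ⁻¹' B = (fun x : ProjLimit f => x.1 n') ⁻¹' B' := by
  induction n', h using Nat.le_induction with
  | base => exact ⟨B, hB, rfl⟩
  | succ n' _ ih =>
    obtain ⟨B', hB', hpre⟩ := ih
    refine ⟨f n' ⁻¹' B', hf n' hB', hpre.trans ?_⟩
    ext x
    simp only [Set.mem_preimage, x.2 n']

variable (f) in
def cylinders : Set (Set (ProjLimit f)) :=
  {s | ∃ n, ∃ B : Set (X n), MeasurableSet B ∧ (fun x : ProjLimit f => x.1 n) ⁻¹' B = s}

theorem measurableSpace_eq_generateFrom_cylinders :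
    (inferInstance : MeasurableSpace (ProjLimit f)) =
      MeasurableSpace.generateFrom (cylinders f) := by
  refine le_antisymm ?_ (MeasurableSpace.generateFrom_le ?_)
  · refine MeasurableSpace.comap_le_iff_le_map.2 (iSup_le fun n => ?_)
    rintro _ ⟨B, hB, rfl⟩
    exact MeasurableSpace.measurableSet_generateFrom ⟨n, B, hB, rfl⟩
  · rintro _ ⟨n, B, hB, rfl⟩
    exact measurable_coord n hB

theorem isPiSystem_cylinders (hf : ∀ n, Measurable (f n)) : IsPiSystem (cylinders f) := by
  rintro _ ⟨n, B, hB, rfl⟩ _ ⟨n', B', hB', rfl⟩ -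
  obtain ⟨C, hC, hBC⟩ := exists_preimage_coord_eq hf (le_max_left n n') hB
  obtain ⟨C', hC', hBC'⟩ := exists_preimage_coord_eq hf (le_max_right n n') hB'
  exact ⟨max n n', C ∩ C', hC.inter hC', by rw [hBC, hBC']; rfl⟩

theorem measurable_of_coord_ge {α : Type*} [MeasurableSpace α] (hf : ∀ n, Measurable (f n))
    (k : ℕ) {g : α → ProjLimit f} (hg : ∀ n, k ≤ n → Measurable fun a => (g a).1 n) :
    Measurable g := by
  suffices ∀ j n, k ≤ n + j → Measurable fun a => (g a).1 n from
    Measurable.subtype_mk (measurable_pi_iff.2 fun n => this k n (by omega))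
  intro j
  induction j with
  | zero => exact hg
  | succ j ih =>
    intro n hn
    simp only [← (g _).2 n]
    exact (hf n).comp (ih (n + 1) (by omega))

theorem ext_of_map_coord_ge (hf : ∀ n, Measurable (f n)) (k : ℕ) {μ ν : Measure (ProjLimit f)}
    [IsFiniteMeasure μ]
    (h : ∀ n, k ≤ n → μ.map (fun x => x.1 n) = ν.map (fun x => x.1 n)) : μ = ν := by
  have hcyl : ∀ n B, MeasurableSet B → k ≤ n →
      μ ((fun x : ProjLimit f => x.1 n) ⁻¹' B) = ν ((fun x : ProjLimit f => x.1 n) ⁻¹' B) :=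
    fun n B hB hn => by
      rw [← Measure.map_apply (measurable_coord n) hB, ← Measure.map_apply (measurable_coord n) hB,
        h n hn]
  refine ext_of_generate_finite _ measurableSpace_eq_generateFrom_cylinders
    (isPiSystem_cylinders hf) ?_ (hcyl k Set.univ MeasurableSet.univ le_rfl)
  rintro _ ⟨n, B, hB, rfl⟩
  obtain ⟨C, hC, hBC⟩ := exists_preimage_coord_eq hf (le_max_left n k) hB
  rw [hBC]
  exact hcyl _ C hC (le_max_right n k)

end ProjLimit

section InvariantMeasure

variable {G : Type*} [Group G] [MeasurableSpace G] [MeasurableMul₂ G]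

theorem eq_of_isMulLeftInvariant_of_isMulRightInvariant (μ ν : Measure G)
    [IsProbabilityMeasure μ] [IsProbabilityMeasure ν] [μ.IsMulLeftInvariant]
    [ν.IsMulRightInvariant] : μ = ν := by
  ext s hs
  have hf : Measurable (s.indicator (1 : G → ℝ≥0∞)) := measurable_one.indicator hs
  calc μ s = ∫⁻ y, ∫⁻ x, s.indicator 1 (y * x) ∂μ ∂ν := by
        simp only [lintegral_mul_left_eq_self, lintegral_indicator_one hs, lintegral_const,
          measure_univ, mul_one]
    _ = ∫⁻ x, ∫⁻ y, s.indicator 1 (y * x) ∂ν ∂μ :=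
        lintegral_lintegral_swap (f := fun y x => s.indicator 1 (y * x))
          (hf.comp measurable_mul).aemeasurable
    _ = ν s := by
        simp only [lintegral_mul_right_eq_self, lintegral_indicator_one hs, lintegral_const,
          measure_univ, mul_one]

theorem isMulRightInvariant_of_isMulLeftInvariant [MeasurableInv G] (μ : Measure G)
    [IsProbabilityMeasure μ] [μ.IsMulLeftInvariant] : μ.IsMulRightInvariant := by
  have : IsProbabilityMeasure μ.inv := Measure.isProbabilityMeasure_map measurable_inv.aemeasurable
  rw [eq_of_isMulLeftInvariant_of_isMulRightInvariant μ μ.inv]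
  infer_instance

theorem map_mul_mul_eq_self [MeasurableInv G] (μ : Measure G) [IsProbabilityMeasure μ]
    [μ.IsMulLeftInvariant] (a b : G) : μ.map (fun x => a * x * b) = μ := by
  have := isMulRightInvariant_of_isMulLeftInvariant μ
  change μ.map ((· * b) ∘ (a * ·)) = μ
  rw [← Measure.map_map (measurable_mul_const b) (measurable_const_mul a), map_mul_left_eq_self,
    map_mul_right_eq_self]

end InvariantMeasure

section SchurCorner

variable {R : Type*} [Field R] [DecidableEq R] {n : ℕ}

def schurCorner (M : Matrix (Fin n ⊕ Fin 1) (Fin n ⊕ Fin 1) R) : Matrix (Fin n) (Fin n) R :=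
  if M (.inr 0) (.inr 0) = -1 then M.toBlocks₁₁
  else M.toBlocks₁₁ - (1 + M (.inr 0) (.inr 0))⁻¹ • (M.toBlocks₁₂ * M.toBlocks₂₁)

theorem schurCorner_fromBlocks_mul_mul (g h : Matrix (Fin n) (Fin n) R)
    (M : Matrix (Fin n ⊕ Fin 1) (Fin n ⊕ Fin 1) R) :
    schurCorner (fromBlocks g 0 0 1 * M * fromBlocks h 0 0 1) = g * schurCorner M * h := by
  rw [← fromBlocks_toBlocks M, fromBlocks_multiply, fromBlocks_multiply]
  simp only [schurCorner, fromBlocks_apply₂₂, toBlocks_fromBlocks₁₁, toBlocks_fromBlocks₁₂,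
    toBlocks_fromBlocks₂₁, Matrix.mul_zero, Matrix.zero_mul, add_zero, zero_add, Matrix.one_mul,
    Matrix.mul_one]
  by_cases ht : M.toBlocks₂₂ 0 0 = -1 <;> simp only [ht, ↓reduceIte, Matrix.mul_sub,
    Matrix.sub_mul, Matrix.mul_smul, Matrix.smul_mul, Matrix.mul_assoc]

end SchurCorner

theorem blockPi_eq_schurCorner (m : ℕ) (u : UU (m + 1)) :
    blockPi m u = schurCorner ((u : Matrix (Fin (m + 2)) (Fin (m + 2)) ℂ).submatrix
      finSumFinEquiv finSumFinEquiv) := by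
  have hlast : Fin.natAdd (m + 1) (0 : Fin 1) = Fin.last (m + 1) := rfl
  have hcast : ∀ i : Fin (m + 1), Fin.castAdd 1 i = i.castSucc := fun _ => rfl
  unfold blockPi schurCorner
  by_cases ht :
      (u : Matrix (Fin (m + 2)) (Fin (m + 2)) ℂ) (Fin.last (m + 1)) (Fin.last (m + 1)) = -1
    <;> ext i j
    <;> simp only [ht, ↓reduceIte, submatrix_apply, finSumFinEquiv_apply_left,
      finSumFinEquiv_apply_right, hlast, hcast, toBlocks₁₁, toBlocks₁₂, toBlocks₂₁, of_apply,
      Matrix.sub_apply, Matrix.smul_apply, Matrix.mul_apply, Fin.sum_univ_one, smul_eq_mul]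
  ring

theorem UU.measurable_of_entries {α : Type*} [MeasurableSpace α] {m : ℕ} {g : α → UU m}
    (hg : ∀ i j, Measurable fun a => (g a : Matrix (Fin (m + 1)) (Fin (m + 1)) ℂ) i j) :
    Measurable g := by
  refine measurable_generateFrom fun t ht => ?_
  obtain ⟨U, hU, rfl⟩ :
      ∃ U : Set (Fin (m + 1) → Fin (m + 1) → ℂ), IsOpen U ∧ Subtype.val ⁻¹' U = t :=
    isOpen_induced_iff.1 ht
  exact (measurable_pi_iff.2 fun i => measurable_pi_iff.2 (hg i)) hU.measurableSet

@[fun_prop]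
theorem UU.measurable_entry {m : ℕ} (i j : Fin (m + 1)) :
    Measurable fun u : UU m => (u : Matrix (Fin (m + 1)) (Fin (m + 1)) ℂ) i j :=
  (continuous_subtype_val.matrix_elem i j).measurable

theorem IsProjSystem.measurable {π : ∀ m, UU (m + 1) → UU m} (hπ : IsProjSystem π) (m : ℕ) :
    Measurable (π m) := by
  refine UU.measurable_of_entries fun i j => ?_
  simp only [hπ m, blockPi_eq_schurCorner, schurCorner,
    apply_ite (fun M : Matrix (Fin (m + 1)) (Fin (m + 1)) ℂ => M i j)]
  refine Measurable.ite ((UU.measurable_entry _ _) (measurableSet_singleton _)) ?_ ?_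
  all_goals
    simp only [toBlocks₁₁, toBlocks₁₂, toBlocks₂₁, of_apply, submatrix_apply, Matrix.sub_apply,
      Matrix.smul_apply, Matrix.mul_apply, Fin.sum_univ_one, smul_eq_mul]
    fun_prop

section Embedding

variable {k m : ℕ}

def embedEquiv (h : k ≤ m) : Fin (k + 1) ⊕ Fin (m - k) ≃ Fin (m + 1) :=
  finSumFinEquiv.trans (finCongr (by omega))

theorem embedMat_submatrix_embedEquiv (h : k ≤ m) (x : Matrix (Fin (k + 1)) (Fin (k + 1)) ℂ) :
    (embedMat k m x).submatrix (embedEquiv h) (embedEquiv h) = fromBlocks x 0 0 1 := by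
  have hk : ∀ a, ¬k + 1 + a ≤ k := by omega
  ext (i | i) (j | j) <;>
    simp only [embedEquiv, Equiv.coe_trans, Function.comp_apply, submatrix_apply, embedMat,
      finSumFinEquiv_apply_left, finSumFinEquiv_apply_right, finCongr_apply, Fin.val_cast,
      Fin.val_castAdd, Fin.val_natAdd, Order.lt_add_one_iff, Fin.is_le, hk, and_self, and_true,
      and_false, ↓reduceDIte, Fin.eta, fromBlocks_apply₁₁, fromBlocks_apply₁₂, fromBlocks_apply₂₁,
      fromBlocks_apply₂₂, Matrix.zero_apply, Matrix.one_apply, Fin.ext_iff, Nat.add_left_cancel_iff,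
      ite_eq_right_iff, one_ne_zero, imp_false] <;> omega

theorem embedMat_mem_unitaryGroup (h : k ≤ m) {x : Matrix (Fin (k + 1)) (Fin (k + 1)) ℂ}
    (hx : x ∈ unitaryGroup (Fin (k + 1)) ℂ) : embedMat k m x ∈ unitaryGroup (Fin (m + 1)) ℂ := by
  have hB : fromBlocks x 0 0 (1 : Matrix (Fin (m - k)) (Fin (m - k)) ℂ) ∈ unitaryGroup _ ℂ := by
    rw [mem_unitaryGroup_iff, star_eq_conjTranspose, fromBlocks_conjTranspose, fromBlocks_multiply]
    simp [← star_eq_conjTranspose, mem_unitaryGroup_iff.1 hx]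
  have hE : embedMat k m x =
      (fromBlocks x 0 0 1).submatrix (embedEquiv h).symm (embedEquiv h).symm := by
    rw [← embedMat_submatrix_embedEquiv h, submatrix_submatrix, Equiv.self_comp_symm,
      submatrix_id_id]
  rw [hE, mem_unitaryGroup_iff, star_eq_conjTranspose, conjTranspose_submatrix,
    submatrix_mul_equiv, ← star_eq_conjTranspose, mem_unitaryGroup_iff.1 hB, submatrix_one_equiv]

def embedU (h : k ≤ m) (x : UU k) : UU m := ⟨embedMat k m x, embedMat_mem_unitaryGroup h x.2⟩

theorem embedMat_succ_submatrix (h : k ≤ m) (x : Matrix (Fin (k + 1)) (Fin (k + 1)) ℂ) :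
    (embedMat k (m + 1) x).submatrix finSumFinEquiv finSumFinEquiv =
      fromBlocks (embedMat k m x) 0 0 1 := by
  ext (i | i) (j | j)
  · rfl
  all_goals
    simp only [submatrix_apply, embedMat, finSumFinEquiv_apply_left, finSumFinEquiv_apply_right,
      Fin.val_castAdd, Fin.val_natAdd, Fin.val_eq_zero, add_zero, Order.lt_add_one_iff,
      Order.add_one_le_iff, not_lt.2 h, and_self, and_false, false_and, ↓reduceDIte, ↓reduceIte,
      fromBlocks_apply₁₂, fromBlocks_apply₂₁, fromBlocks_apply₂₂,
      Matrix.zero_apply, Matrix.one_apply, Fin.ext_iff, ite_eq_right_iff, one_ne_zero, imp_false]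
      <;> omega

theorem blockPi_embedU_mul_mul_embedU (h : k ≤ m) (x y : UU k) (u : UU (m + 1)) :
    blockPi m (embedU (h.trans m.le_succ) x * u * embedU (h.trans m.le_succ) y) =
      embedMat k m x * blockPi m u * embedMat k m y := by
  rw [blockPi_eq_schurCorner, blockPi_eq_schurCorner, UnitaryGroup.mul_val, UnitaryGroup.mul_val,
    ← submatrix_mul_equiv _ _ _ finSumFinEquiv, ← submatrix_mul_equiv _ _ _ finSumFinEquiv]
  simp only [embedU, embedMat_succ_submatrix h, schurCorner_fromBlocks_mul_mul]

theorem IsProjSystem.apply_embedU_mul_mul_embedU {π : ∀ m, UU (m + 1) → UU m} (hπ : IsProjSystem π)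
    (h : k ≤ m) (x y : UU k) (u : UU (m + 1)) :
    π m (embedU (h.trans m.le_succ) x * u * embedU (h.trans m.le_succ) y) =
      embedU h x * π m u * embedU h y :=
  Subtype.ext <| by rw [hπ, blockPi_embedU_mul_mul_embedU h, ← hπ]; rfl

end Embedding

theorem statement1_general
    (π : ∀ m, UU (m + 1) → UU m) (hπ : IsProjSystem π)
    (χm : ∀ m, Measure (UU m))
    (hprob : ∀ m, IsProbabilityMeasure (χm m))
    (hinv : ∀ (m : ℕ) (g : UU m), (χm m).map (fun x => g * x) = χm m)
    (χ : Measure (VU π)) (hχprob : IsProbabilityMeasure χ)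
    (hχ : ∀ m, χ.map (fun u : VU π => u.1 m) = χm m)
    (k : ℕ) (v w : UU k) :
    (∀ u : VU π, ∃! y : VU π, ∀ m, k ≤ m →
        ((y.1 m : Matrix (Fin (m + 1)) (Fin (m + 1)) ℂ)) =
          embedMat k m ((w⁻¹ : UU k) : Matrix (Fin (k + 1)) (Fin (k + 1)) ℂ) *
            (u.1 m : Matrix (Fin (m + 1)) (Fin (m + 1)) ℂ) *
            embedMat k m (v : Matrix (Fin (k + 1)) (Fin (k + 1)) ℂ)) ∧
    ∀ A : VU π → VU π,
      (∀ (u : VU π) (m : ℕ), k ≤ m →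
        (((A u).1 m : Matrix (Fin (m + 1)) (Fin (m + 1)) ℂ)) =
          embedMat k m ((w⁻¹ : UU k) : Matrix (Fin (k + 1)) (Fin (k + 1)) ℂ) *
            (u.1 m : Matrix (Fin (m + 1)) (Fin (m + 1)) ℂ) *
            embedMat k m (v : Matrix (Fin (k + 1)) (Fin (k + 1)) ℂ)) →
      Measurable A ∧ χ.map A = χ := by
  set act : ∀ n, k ≤ n → UU n → UU n := fun n h x => embedU h w⁻¹ * x * embedU h v
  have hact : ∀ n (h : k ≤ n) (x : UU n) (y : UU n),
      (y : Matrix (Fin (n + 1)) (Fin (n + 1)) ℂ) = embedMat k n (w⁻¹ : UU k) * x * embedMat k n v ↔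
        y = act n h x := fun n h x y => by rw [Subtype.ext_iff]; rfl
  refine ⟨fun u => ?_, fun A hA => ?_⟩
  · refine (existsUnique_congr fun y => forall₂_congr fun n h => hact n h _ _).2 ?_
    refine ProjLimit.existsUnique_of_compat (F := fun n h => act n h (u.1 n)) fun n h => ?_
    simp only [act, hπ.apply_embedU_mul_mul_embedU h, u.2 n]
  have hA' : ∀ u n (h : k ≤ n), (A u).1 n = act n h (u.1 n) :=
    fun u n h => (hact n h _ _).1 (hA u n h)
  have hmeas : ∀ n (h : k ≤ n), Measurable (act n h) :=
    fun n h => (measurable_const_mul _).mul_const _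
  have hAm : Measurable A := ProjLimit.measurable_of_coord_ge hπ.measurable k fun n h => by
    simp only [hA' _ n h]
    exact (hmeas n h).comp (ProjLimit.measurable_coord n)
  refine ⟨hAm, (ProjLimit.ext_of_map_coord_ge hπ.measurable k fun n h => ?_).symm⟩
  have := hprob n
  have : (χm n).IsMulLeftInvariant := ⟨hinv n⟩
  rw [Measure.map_map (ProjLimit.measurable_coord n) hAm]
  calc χ.map (fun u : VU π => u.1 n)
      = (χ.map fun u : VU π => u.1 n).map (act n h) := by rw [hχ, map_mul_mul_eq_self]
    _ = χ.map ((fun u : VU π => u.1 n) ∘ A) := by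
      rw [Measure.map_map (hmeas n h) (ProjLimit.measurable_coord n)]
      exact congrArg χ.map (funext fun u => (hA' u n h).symm)

/-- The right action `𝔲 ↦ 𝔲.g`, `g = (v,w) ∈ U(k)×U(k)`, exists and is unique
on the projective limit, and any map realizing it is Borel measurable and preserves `χ`. -/
theorem statement1
    (π : ∀ m, UU (m + 1) → UU m) (hπ : IsProjSystem π)
    (χm : ∀ m, Measure (UU m))
    (hprob : ∀ m, IsProbabilityMeasure (χm m))
    (hinv : ∀ (m : ℕ) (g : UU m), (χm m).map (fun x => g * x) = χm m)
    (hcons : ∀ m, (χm (m + 1)).map (π m) = χm m)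
    (χ : Measure (VU π)) (hχprob : IsProbabilityMeasure χ)
    (hχ : ∀ m, χ.map (fun u : VU π => u.1 m) = χm m)
    (k : ℕ) (v w : UU k) :
    (∀ u : VU π, ∃! y : VU π, ∀ m, k ≤ m →
        ((y.1 m : Matrix (Fin (m + 1)) (Fin (m + 1)) ℂ)) =
          embedMat k m ((w⁻¹ : UU k) : Matrix (Fin (k + 1)) (Fin (k + 1)) ℂ) *
            (u.1 m : Matrix (Fin (m + 1)) (Fin (m + 1)) ℂ) *
            embedMat k m (v : Matrix (Fin (k + 1)) (Fin (k + 1)) ℂ)) ∧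
    ∀ A : VU π → VU π,
      (∀ (u : VU π) (m : ℕ), k ≤ m →
        (((A u).1 m : Matrix (Fin (m + 1)) (Fin (m + 1)) ℂ)) =
          embedMat k m ((w⁻¹ : UU k) : Matrix (Fin (k + 1)) (Fin (k + 1)) ℂ) *
            (u.1 m : Matrix (Fin (m + 1)) (Fin (m + 1)) ℂ) *
            embedMat k m (v : Matrix (Fin (k + 1)) (Fin (k + 1)) ℂ)) →
      Measurable A ∧ χ.map A = χ :=
  statement1_general π hπ χm hprob hinv χ hχprob hχ k v w
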